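/- arXiv:2005.04783 — 7 statements merged into one kernel-verified Lean document; each statement's English description precedes it below -/
import Mathlib

section
/- Let p = (p₁,p₂,p₃) and q = (q₁,q₂,q₃) be two triples of points in ℂ² such that d(pⱼ,pₖ) ≠ 0 for all 1 ≤ j < k ≤ 3, and suppose d(pⱼ,pₖ) = d(qⱼ,qₖ) for all 1 ≤ j < k ≤ 3. Then there exists g ∈ E(ℂ) (i.e., a 2×2 complex matrix A with AᵀA = I and a vector v ∈ ℂ²) such that A pᵢ + v = qᵢ for i = 1, 2, 3. -/
open scoped Matrix

noncomputable section

/-- Squared distance between two points of `ℂ²`. -/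
def sqDist (p q : ℂ × ℂ) : ℂ := (p.1 - q.1) ^ 2 + (p.2 - q.2) ^ 2

/-- A complex orthogonal 2×2 matrix: `Aᵀ A = I`. -/
def IsOrtho (A : Matrix (Fin 2) (Fin 2) ℂ) : Prop := A.transpose * A = 1

/-- The affine map `x ↦ A x + v` on `ℂ²`. -/
def euclApply (A : Matrix (Fin 2) (Fin 2) ℂ) (v : ℂ × ℂ) (p : ℂ × ℂ) : ℂ × ℂ :=
  (A 0 0 * p.1 + A 0 1 * p.2 + v.1, A 1 0 * p.1 + A 1 1 * p.2 + v.2)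

/-- A plane algebraic curve: the zero set of an irreducible polynomial of total degree `> 1`. -/
def IsPlaneCurve (C : Set (ℂ × ℂ)) : Prop :=
  ∃ f : MvPolynomial (Fin 2) ℂ, Irreducible f ∧ 1 < f.totalDegree ∧
    C = {p : ℂ × ℂ | MvPolynomial.eval ![p.1, p.2] f = 0}

lemma ortho_eqs {A : Matrix (Fin 2) (Fin 2) ℂ} (h : IsOrtho A) :
    A 0 0 ^ 2 + A 1 0 ^ 2 = 1 ∧ A 0 1 ^ 2 + A 1 1 ^ 2 = 1 ∧
      A 0 0 * A 0 1 + A 1 0 * A 1 1 = 0 := by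
  have h00 := congrFun (congrFun h 0) 0
  have h11 := congrFun (congrFun h 1) 1
  have h01 := congrFun (congrFun h 0) 1
  simp [Matrix.mul_apply, Matrix.transpose_apply, Fin.sum_univ_two,
    Matrix.one_apply] at h00 h11 h01
  exact ⟨by linear_combination h00, by linear_combination h11, by linear_combination h01⟩

lemma sqDist_invariant {A : Matrix (Fin 2) (Fin 2) ℂ} (h : IsOrtho A) (v x y : ℂ × ℂ) :
    sqDist (euclApply A v x) (euclApply A v y) = sqDist x y := by
  obtain ⟨e1, e2, e3⟩ := ortho_eqs h
  simp only [sqDist, euclApply]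
  ring_nf
  linear_combination ((x.1 - y.1) ^ 2) * e1 + ((x.2 - y.2) ^ 2) * e2 +
    (2 * (x.1 - y.1) * (x.2 - y.2)) * e3

lemma euclApply_comp (A B : Matrix (Fin 2) (Fin 2) ℂ) (v w x : ℂ × ℂ) :
    euclApply A v (euclApply B w x) = euclApply (A * B) (euclApply A v w) x := by
  simp only [euclApply, Matrix.mul_apply, Fin.sum_univ_two, Prod.mk.injEq]
  constructor <;> ring

lemma euclApply_one (x : ℂ × ℂ) : euclApply 1 (0, 0) x = x := by
  simp [euclApply, Matrix.one_apply]

lemma isOrtho_mul {A B : Matrix (Fin 2) (Fin 2) ℂ} (hA : IsOrtho A) (hB : IsOrtho B) :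
    IsOrtho (A * B) := by
  unfold IsOrtho at *
  rw [Matrix.transpose_mul, Matrix.mul_assoc, ← Matrix.mul_assoc A.transpose, hA,
    Matrix.one_mul, hB]

lemma euclApply_inv {A : Matrix (Fin 2) (Fin 2) ℂ} (v : ℂ × ℂ) (h : IsOrtho A) :
    ∃ C u, IsOrtho C ∧ ∀ x, euclApply C u (euclApply A v x) = x := by
  refine ⟨A.transpose,
    (-(A.transpose 0 0 * v.1 + A.transpose 0 1 * v.2),
     -(A.transpose 1 0 * v.1 + A.transpose 1 1 * v.2)), ?_, ?_⟩
  · unfold IsOrtho at *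
    rw [Matrix.transpose_transpose]
    exact mul_eq_one_comm.mp h
  · intro x
    rw [euclApply_comp, h]
    have hv : euclApply A.transpose
        (-(A.transpose 0 0 * v.1 + A.transpose 0 1 * v.2),
         -(A.transpose 1 0 * v.1 + A.transpose 1 1 * v.2)) v = (0, 0) := by
      simp only [euclApply, Prod.mk.injEq]
      constructor <;> ring
    rw [hv, euclApply_one]

lemma normalize3 (p : Fin 3 → ℂ × ℂ) {c : ℂ} (hc : c ≠ 0)
    (hcs : c ^ 2 = sqDist (p 0) (p 1)) :
    ∃ A v, IsOrtho A ∧ euclApply A v (p 0) = (0, 0) ∧ euclApply A v (p 1) = (c, 0) := by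
  have key : ∃ u1 u2 : ℂ, u1 ^ 2 + u2 ^ 2 = 1 ∧ u1 * c = (p 1).1 - (p 0).1 ∧
      u2 * c = (p 1).2 - (p 0).2 := by
    refine ⟨((p 1).1 - (p 0).1) / c, ((p 1).2 - (p 0).2) / c, ?_, by field_simp, by field_simp⟩
    have hd : ((p 1).1 - (p 0).1) ^ 2 + ((p 1).2 - (p 0).2) ^ 2 = c ^ 2 := by
      rw [hcs]; simp only [sqDist]; ring
    field_simp
    linear_combination hd
  obtain ⟨u1, u2, hu, h1, h2⟩ := key
  refine ⟨!![u1, u2; -u2, u1],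
    (-(u1 * (p 0).1 + u2 * (p 0).2), -(-u2 * (p 0).1 + u1 * (p 0).2)), ?_, ?_, ?_⟩
  · unfold IsOrtho
    ext i j
    fin_cases i <;> fin_cases j <;>
      simp only [Matrix.mul_apply, Matrix.transpose_apply, Fin.sum_univ_two,
        Matrix.one_apply, Matrix.cons_val', Matrix.cons_val_zero, Matrix.cons_val_one,
        Matrix.head_cons, Matrix.head_fin_const, Matrix.of_apply, Matrix.empty_val',
        Matrix.cons_val_fin_one, Fin.mk_zero, Fin.mk_one, if_true, if_false,
        Fin.zero_eq_one_iff, Fin.one_eq_zero_iff, ne_eq, OfNat.ofNat_ne_one,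
        not_false_eq_true, ite_true, ite_false] <;>
      first
        | linear_combination hu
        | linear_combination -hu
        | (simp; first | linear_combination hu | linear_combination -hu | ring)
  · simp only [euclApply, Prod.mk.injEq, Matrix.cons_val', Matrix.cons_val_zero,
      Matrix.cons_val_one, Matrix.head_cons, Matrix.head_fin_const, Matrix.of_apply,
      Matrix.empty_val', Matrix.cons_val_fin_one]
    constructor <;> ring
  · simp only [euclApply, Prod.mk.injEq, Matrix.cons_val', Matrix.cons_val_zero,
      Matrix.cons_val_one, Matrix.head_cons, Matrix.head_fin_const, Matrix.of_apply,
      Matrix.empty_val', Matrix.cons_val_fin_one]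
    constructor
    · linear_combination -u1 * h1 - u2 * h2 + c * hu
    · linear_combination u2 * h1 - u1 * h2

lemma isOrtho_diag (s : ℂ) (hs : s ^ 2 = 1) : IsOrtho !![(1 : ℂ), 0; 0, s] := by
  unfold IsOrtho
  ext i j
  fin_cases i <;> fin_cases j <;>
    simp only [Matrix.mul_apply, Matrix.transpose_apply, Fin.sum_univ_two,
      Matrix.one_apply, Matrix.cons_val', Matrix.cons_val_zero, Matrix.cons_val_one,
      Matrix.head_cons, Matrix.head_fin_const, Matrix.of_apply, Matrix.empty_val',
      Matrix.cons_val_fin_one, Fin.mk_zero, Fin.mk_one, if_true, if_false,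
      Fin.zero_eq_one_iff, Fin.one_eq_zero_iff, ne_eq, OfNat.ofNat_ne_one,
      not_false_eq_true, ite_true, ite_false] <;>
    first
      | linear_combination hs
      | simp

lemma euclApply_diag (s : ℂ) (x : ℂ × ℂ) :
    euclApply !![(1 : ℂ), 0; 0, s] (0, 0) x = (x.1, s * x.2) := by
  simp [euclApply]

theorem separation_on_W3 (p q : Fin 3 → ℂ × ℂ)
    (hp : ∀ j k : Fin 3, j < k → sqDist (p j) (p k) ≠ 0)
    (heq : ∀ j k : Fin 3, j < k → sqDist (p j) (p k) = sqDist (q j) (q k)) :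
    ∃ (A : Matrix (Fin 2) (Fin 2) ℂ) (v : ℂ × ℂ), IsOrtho A ∧
      ∀ i : Fin 3, euclApply A v (p i) = q i := by
  obtain ⟨c, hc2⟩ : ∃ c : ℂ, c ^ 2 = sqDist (p 0) (p 1) :=
    IsAlgClosed.exists_pow_nat_eq _ (by norm_num)
  have hc : c ≠ 0 := by
    intro h
    exact hp 0 1 (by decide) (by rw [← hc2, h]; ring)
  obtain ⟨A, v, hA, hA0, hA1⟩ := normalize3 p hc hc2
  obtain ⟨B, w, hB, hB0, hB1⟩ := normalize3 q hc (by rw [hc2]; exact heq 0 1 (by decide))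
  have e02 : sqDist ((0 : ℂ), (0 : ℂ)) (euclApply A v (p 2))
      = sqDist ((0 : ℂ), (0 : ℂ)) (euclApply B w (q 2)) := by
    have h := heq 0 2 (by decide)
    rw [← sqDist_invariant hA v (p 0) (p 2), ← sqDist_invariant hB w (q 0) (q 2),
      hA0, hB0] at h
    exact h
  have e12 : sqDist ((c : ℂ), (0 : ℂ)) (euclApply A v (p 2))
      = sqDist ((c : ℂ), (0 : ℂ)) (euclApply B w (q 2)) := by
    have h := heq 1 2 (by decide)
    rw [← sqDist_invariant hA v (p 1) (p 2), ← sqDist_invariant hB w (q 1) (q 2),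
      hA1, hB1] at h
    exact h
  set P2 := euclApply A v (p 2) with hP2
  set Q2 := euclApply B w (q 2) with hQ2
  simp only [sqDist] at e02 e12
  have hx : P2.1 = Q2.1 := by
    have h2 : 2 * c * P2.1 = 2 * c * Q2.1 := by linear_combination e02 - e12
    exact mul_left_cancel₀ (by simpa using hc) h2
  have hy2 : (P2.2 - Q2.2) * (P2.2 + Q2.2) = 0 := by
    linear_combination e02 - (P2.1 + Q2.1) * hx
  obtain ⟨s, hs1, hs2⟩ : ∃ s : ℂ, s ^ 2 = 1 ∧ s * P2.2 = Q2.2 := by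
    rcases mul_eq_zero.mp hy2 with h | h
    · exact ⟨1, by norm_num, by linear_combination h⟩
    · exact ⟨-1, by norm_num, by linear_combination -h⟩
  set S := !![(1 : ℂ), 0; 0, s] with hS
  have hSo : IsOrtho S := isOrtho_diag s hs1
  obtain ⟨C, u, hC, hinv⟩ := euclApply_inv w hB
  have himg : ∀ i : Fin 3, euclApply S (0, 0) (euclApply A v (p i)) = euclApply B w (q i) := by
    intro i
    fin_cases i
    · show euclApply S (0, 0) (euclApply A v (p 0)) = euclApply B w (q 0)
      rw [hA0, hB0, hS, euclApply_diag]
      simp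
    · show euclApply S (0, 0) (euclApply A v (p 1)) = euclApply B w (q 1)
      rw [hA1, hB1, hS, euclApply_diag]
      simp
    · show euclApply S (0, 0) (euclApply A v (p 2)) = euclApply B w (q 2)
      rw [← hP2, ← hQ2, hS, euclApply_diag, hx, hs2]
  refine ⟨C * (S * A), euclApply C u (euclApply S (0, 0) v),
    isOrtho_mul hC (isOrtho_mul hSo hA), ?_⟩
  intro i
  rw [← euclApply_comp, ← euclApply_comp, himg i, hinv]
end
end

section
/- Let p = (p₁,p₂,p₃,p₄) and q = (q₁,q₂,q₃,q₄) be two 4-tuples of points in ℂ² such that d(pⱼ,pₖ) ≠ 0 for all 1 ≤ j < k ≤ 4, and suppose d(pⱼ,pₖ) = d(qⱼ,qₖ) for all 1 ≤ j < k ≤ 4. Then there exists g ∈ E(ℂ) (i.e., a 2×2 complex matrix A with AᵀA = I and a vector v ∈ ℂ²) such that A pᵢ + v = qᵢ for i = 1, 2, 3, 4. -/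
open scoped Matrix

noncomputable section

/-- Choosing a common sign. -/
lemma signchoice (b3 b4 c3 c4 : ℂ) (h3 : c3^2 = b3^2) (h4 : c4^2 = b4^2)
    (h34 : b3*b4 = c3*c4) : ∃ ε : ℂ, ε^2 = 1 ∧ c3 = ε*b3 ∧ c4 = ε*b4 := by
  by_cases hb3 : b3 = 0
  · have hc3 : c3 = 0 := by
      have := h3; rw [hb3] at this; simpa [pow_eq_zero_iff] using this
    by_cases hb4 : b4 = 0
    · have hc4 : c4 = 0 := by
        have := h4; rw [hb4] at this; simpa [pow_eq_zero_iff] using this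
      exact ⟨1, by ring, by simp [hc3, hb3], by simp [hc4, hb4]⟩
    · refine ⟨c4/b4, ?_, ?_, ?_⟩
      · field_simp; linear_combination h4
      · simp [hc3, hb3]
      · field_simp
  · have hc3 : c3 ≠ 0 := by
      intro h; apply hb3
      have := h3; rw [h] at this
      have h0 : b3^2 = 0 := by linear_combination -this
      simpa [pow_eq_zero_iff] using h0
    refine ⟨c3/b3, ?_, ?_, ?_⟩
    · field_simp; linear_combination h3
    · field_simp
    · have key : c3 * (c3 * b4 - b3 * c4) = 0 := by linear_combination b4 * h3 + b3 * h34
      have := mul_eq_zero.mp key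
      rcases this with h | h
      · exact absurd h hc3
      · field_simp
        linear_combination -h

set_option maxHeartbeats 1000000 in
/-- The core construction: an orthogonal matrix matching three vectors whose pairwise
bilinear products agree, the first being anisotropic. -/
lemma core (a b x3 y3 x4 y4 wa wb s3 t3 s4 t4 : ℂ)
    (h22 : a^2+b^2 = wa^2+wb^2)
    (h33 : x3^2+y3^2 = s3^2+t3^2)
    (h44 : x4^2+y4^2 = s4^2+t4^2)
    (h23 : a*x3+b*y3 = wa*s3+wb*t3)
    (h24 : a*x4+b*y4 = wa*s4+wb*t4)
    (h34 : x3*x4+y3*y4 = s3*s4+t3*t4)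
    (hc : a^2+b^2 ≠ 0) :
    ∃ A : Matrix (Fin 2) (Fin 2) ℂ, IsOrtho A ∧
      A 0 0 * a + A 0 1 * b = wa ∧ A 1 0 * a + A 1 1 * b = wb ∧
      A 0 0 * x3 + A 0 1 * y3 = s3 ∧ A 1 0 * x3 + A 1 1 * y3 = t3 ∧
      A 0 0 * x4 + A 0 1 * y4 = s4 ∧ A 1 0 * x4 + A 1 1 * y4 = t4 := by
  have h3sq : (-s3*wb + t3*wa)^2 = (-x3*b + y3*a)^2 := by
    linear_combination -(x3^2+y3^2)*h22 - (wa^2+wb^2)*h33 + (a*x3+b*y3+wa*s3+wb*t3)*h23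
  have h4sq : (-s4*wb + t4*wa)^2 = (-x4*b + y4*a)^2 := by
    linear_combination -(x4^2+y4^2)*h22 - (wa^2+wb^2)*h44 + (a*x4+b*y4+wa*s4+wb*t4)*h24
  have hcross : (-x3*b + y3*a)*(-x4*b + y4*a) = (-s3*wb + t3*wa)*(-s4*wb + t4*wa) := by
    linear_combination (s3*s4+t3*t4)*h22 + (a^2+b^2)*h34 - (wa*s4+wb*t4)*h23 - (a*x3+b*y3)*h24
  obtain ⟨ε, hε, hb3, hb4⟩ := signchoice _ _ _ _ h3sq h4sq hcross
  refine ⟨!![(wa*a + ε*wb*b)/(a^2+b^2), (wa*b - ε*wb*a)/(a^2+b^2);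
            (wb*a - ε*wa*b)/(a^2+b^2), (wb*b + ε*wa*a)/(a^2+b^2)], ?_, ?_, ?_, ?_, ?_, ?_, ?_⟩
  · unfold IsOrtho
    have hT : (!![(wa*a + ε*wb*b)/(a^2+b^2), (wa*b - ε*wb*a)/(a^2+b^2);
            (wb*a - ε*wa*b)/(a^2+b^2), (wb*b + ε*wa*a)/(a^2+b^2)]).transpose
        = !![(wa*a + ε*wb*b)/(a^2+b^2), (wb*a - ε*wa*b)/(a^2+b^2);
            (wa*b - ε*wb*a)/(a^2+b^2), (wb*b + ε*wa*a)/(a^2+b^2)] := by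
      ext i j; fin_cases i <;> fin_cases j <;> rfl
    rw [hT, Matrix.mul_fin_two, Matrix.one_fin_two]
    ext i j
    fin_cases i <;> fin_cases j <;> simp <;> field_simp
    · linear_combination (b^2*(wa^2+wb^2))*hε - (a^2+b^2)*h22
    · linear_combination (-(a*b)*(wa^2+wb^2))*hε
    · linear_combination (-(a*b)*(wa^2+wb^2))*hε
    · linear_combination (a^2*(wa^2+wb^2))*hε - (a^2+b^2)*h22
  · simp; field_simp; ring
  · simp; field_simp; ring
  · simp; field_simp; linear_combination wa*h23 + wb*hb3 - s3*h22
  · simp; field_simp; linear_combination wb*h23 - wa*hb3 - t3*h22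
  · simp; field_simp; linear_combination wa*h24 + wb*hb4 - s4*h22
  · simp; field_simp; linear_combination wb*h24 - wa*hb4 - t4*h22

theorem separation_on_W4 (p q : Fin 4 → ℂ × ℂ)
    (hp : ∀ j k : Fin 4, j < k → sqDist (p j) (p k) ≠ 0)
    (heq : ∀ j k : Fin 4, j < k → sqDist (p j) (p k) = sqDist (q j) (q k)) :
    ∃ (A : Matrix (Fin 2) (Fin 2) ℂ) (v : ℂ × ℂ), IsOrtho A ∧
      ∀ i : Fin 4, euclApply A v (p i) = q i := by
  have h01 := heq 0 1 (by decide)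
  have h02 := heq 0 2 (by decide)
  have h03 := heq 0 3 (by decide)
  have h12 := heq 1 2 (by decide)
  have h13 := heq 1 3 (by decide)
  have h23 := heq 2 3 (by decide)
  simp only [sqDist] at h01 h02 h03 h12 h13 h23
  obtain ⟨A, hA, e1a, e1b, e2a, e2b, e3a, e3b⟩ :=
    core ((p 1).1-(p 0).1) ((p 1).2-(p 0).2) ((p 2).1-(p 0).1) ((p 2).2-(p 0).2)
         ((p 3).1-(p 0).1) ((p 3).2-(p 0).2)
         ((q 1).1-(q 0).1) ((q 1).2-(q 0).2) ((q 2).1-(q 0).1) ((q 2).2-(q 0).2)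
         ((q 3).1-(q 0).1) ((q 3).2-(q 0).2)
         (by linear_combination h01) (by linear_combination h02) (by linear_combination h03)
         (by linear_combination (h01+h02-h12)/2) (by linear_combination (h01+h03-h13)/2)
         (by linear_combination (h02+h03-h23)/2)
         (by
           intro h
           exact hp 0 1 (by decide) (by simp only [sqDist]; linear_combination h))
  refine ⟨A, (((q 0).1 - (A 0 0 * (p 0).1 + A 0 1 * (p 0).2),
              (q 0).2 - (A 1 0 * (p 0).1 + A 1 1 * (p 0).2)) : ℂ × ℂ), hA, ?_⟩
  have k0 : euclApply A (((q 0).1 - (A 0 0 * (p 0).1 + A 0 1 * (p 0).2),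
              (q 0).2 - (A 1 0 * (p 0).1 + A 1 1 * (p 0).2)) : ℂ × ℂ) (p 0) = q 0 := by
    refine Prod.ext ?_ ?_ <;> simp only [euclApply] <;> ring
  have k1 : euclApply A (((q 0).1 - (A 0 0 * (p 0).1 + A 0 1 * (p 0).2),
              (q 0).2 - (A 1 0 * (p 0).1 + A 1 1 * (p 0).2)) : ℂ × ℂ) (p 1) = q 1 := by
    refine Prod.ext ?_ ?_ <;> simp only [euclApply]
    · linear_combination e1a
    · linear_combination e1b
  have k2 : euclApply A (((q 0).1 - (A 0 0 * (p 0).1 + A 0 1 * (p 0).2),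
              (q 0).2 - (A 1 0 * (p 0).1 + A 1 1 * (p 0).2)) : ℂ × ℂ) (p 2) = q 2 := by
    refine Prod.ext ?_ ?_ <;> simp only [euclApply]
    · linear_combination e2a
    · linear_combination e2b
  have k3 : euclApply A (((q 0).1 - (A 0 0 * (p 0).1 + A 0 1 * (p 0).2),
              (q 0).2 - (A 1 0 * (p 0).1 + A 1 1 * (p 0).2)) : ℂ × ℂ) (p 3) = q 3 := by
    refine Prod.ext ?_ ?_ <;> simp only [euclApply]
    · linear_combination e3a
    · linear_combination e3b
  intro i
  fin_cases i
  · exact k0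
  · exact k1
  · exact k2
  · exact k3
end
end

section
/- Let C ⊆ ℂ² be a plane algebraic curve (the zero set of an irreducible polynomial of total degree greater than 1), let n > 1, and let p₁,…,p_{n−1} be points of C with d(pⱼ,pₖ) ≠ 0 for all 1 ≤ j < k ≤ n−1. Then the set {p ∈ C : d(pᵢ,p) = 0 for some 1 ≤ i ≤ n−1} is finite; in particular there exists pₙ ∈ C such that the n-tuple (p₁,…,pₙ) has d(pⱼ,pₖ) ≠ 0 for all 1 ≤ j < k ≤ n, and for every n ≥ 1 there exists an n-tuple of points of C all of whose pairwise squared distances are nonzero. -/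
open scoped Matrix

noncomputable section

namespace GenericTupleAux

open MvPolynomial

/-- The algebra equivalence between one-variable `MvPolynomial` and `Polynomial`. -/
def E1 : MvPolynomial (Fin 1) ℂ ≃ₐ[ℂ] Polynomial ℂ :=
  (renameEquiv ℂ (Equiv.equivPUnit.{1,1} (Fin 1))).trans (pUnitAlgEquiv ℂ)

lemma E1_C (a : ℂ) : E1 (MvPolynomial.C a) = Polynomial.C a := by
  have := E1.commutes a
  simpa [MvPolynomial.algebraMap_eq, Polynomial.algebraMap_eq] using this

lemma E1_eval (r : MvPolynomial (Fin 1) ℂ) (t : ℂ) :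
    Polynomial.eval t (E1 r) = MvPolynomial.eval ![t] r := by
  induction r using MvPolynomial.induction_on with
  | C a => simp [E1_C]
  | add p q hp hq => simp [map_add, hp, hq]
  | mul_X p i hp =>
    have hX : E1 (MvPolynomial.X i) = Polynomial.X := by
      simp [E1, renameEquiv_apply, pUnitAlgEquiv]
    simp [map_mul, hp, hX, Matrix.cons_val_fin_one]

/-- The zero set of a nonzero one-variable polynomial is finite. -/
lemma mv1_finite {r : MvPolynomial (Fin 1) ℂ} (hr : r ≠ 0) :
    {t : ℂ | MvPolynomial.eval ![t] r = 0}.Finite := by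
  have hE : E1 r ≠ 0 := fun h => hr (by simpa using E1.injective (h.trans (map_zero E1).symm))
  have := Polynomial.finite_setOf_isRoot hE
  apply this.subset
  intro t ht
  simp only [Set.mem_setOf_eq, Polynomial.IsRoot, E1_eval]
  exact ht

/-- A nonconstant one-variable polynomial has a root. -/
lemma mv1_exists_root {r : MvPolynomial (Fin 1) ℂ} (hr : ∀ a : ℂ, r ≠ MvPolynomial.C a) :
    ∃ t : ℂ, MvPolynomial.eval ![t] r = 0 := by
  have hnd : (E1 r).natDegree ≠ 0 := by
    intro h
    exact hr ((E1 r).coeff 0)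
      (by apply E1.injective; rw [E1_C]; exact Polynomial.eq_C_of_natDegree_eq_zero h)
  obtain ⟨t, ht⟩ := Complex.exists_root (Polynomial.natDegree_pos_iff_degree_pos.mp
    (Nat.pos_of_ne_zero hnd))
  exact ⟨t, by rw [← E1_eval]; exact ht⟩

lemma td_zero_of_isUnit {k : MvPolynomial (Fin 1) ℂ} (h : IsUnit k) : k.totalDegree = 0 := by
  have h2 : IsUnit (E1 k) := h.map E1
  have h3 : E1 k = Polynomial.C ((E1 k).coeff 0) :=
    Polynomial.eq_C_of_natDegree_eq_zero (Polynomial.natDegree_eq_zero_of_isUnit h2)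
  have h4 : k = MvPolynomial.C ((E1 k).coeff 0) := by
    apply E1.injective; rw [E1_C]; exact h3
  rw [h4]; exact totalDegree_C _

lemma totalDegree_le_of_coeffs (f : MvPolynomial (Fin 2) ℂ) (d : ℕ)
    (h : ∀ i, (finSuccEquiv ℂ 1 f).coeff i ≠ 0 →
      ((finSuccEquiv ℂ 1 f).coeff i).totalDegree + i ≤ d) :
    f.totalDegree ≤ d := by
  rw [totalDegree]
  apply Finset.sup_le
  intro m hm
  have h1 : MvPolynomial.coeff (Finsupp.tail m) ((finSuccEquiv ℂ 1 f).coeff (m 0)) ≠ 0 := by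
    rw [finSuccEquiv_coeff_coeff, Finsupp.cons_tail]
    exact mem_support_iff.mp hm
  have h2 : (finSuccEquiv ℂ 1 f).coeff (m 0) ≠ 0 := fun hz => h1 (by simp [hz])
  have h3 : (Finsupp.tail m).sum (fun _ e => e) ≤
      ((finSuccEquiv ℂ 1 f).coeff (m 0)).totalDegree :=
    le_totalDegree (mem_support_iff.mpr h1)
  have h4 : m.sum (fun _ e => e) = m 0 + (Finsupp.tail m).sum (fun _ e => e) := by
    conv_lhs => rw [← Finsupp.cons_tail m]
    exact Finsupp.sum_cons _ _ _
  have := h (m 0) h2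
  omega

lemma line_r_ne_zero (f : MvPolynomial (Fin 2) ℂ) (hf : Irreducible f)
    (hd : 1 < f.totalDegree) (α : MvPolynomial (Fin 1) ℂ) (hα : α.totalDegree ≤ 1) :
    Polynomial.eval α (finSuccEquiv ℂ 1 f) ≠ 0 := by
  intro h
  obtain ⟨u, hu⟩ : Polynomial.X - Polynomial.C α ∣ finSuccEquiv ℂ 1 f :=
    Polynomial.dvd_iff_isRoot.mpr h
  have hfeq : f = (finSuccEquiv ℂ 1).symm (Polynomial.X - Polynomial.C α) *
      (finSuccEquiv ℂ 1).symm u := by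
    apply (finSuccEquiv ℂ 1).injective
    rw [map_mul, AlgEquiv.apply_symm_apply, AlgEquiv.apply_symm_apply]
    exact hu
  rcases hf.isUnit_or_isUnit hfeq with h1 | h2
  · have : IsUnit (Polynomial.X - Polynomial.C α) := by
      simpa [AlgEquiv.apply_symm_apply] using h1.map (finSuccEquiv ℂ 1)
    exact Polynomial.not_isUnit_X_sub_C α this
  · have hu' : IsUnit u := by
      simpa [AlgEquiv.apply_symm_apply] using h2.map (finSuccEquiv ℂ 1)
    have hu0 : u = Polynomial.C (u.coeff 0) :=
      Polynomial.eq_C_of_natDegree_eq_zero (Polynomial.natDegree_eq_zero_of_isUnit hu')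
    have hk : IsUnit (u.coeff 0) := Polynomial.isUnit_C.mp (hu0 ▸ hu')
    have hkd : (u.coeff 0).totalDegree = 0 := td_zero_of_isUnit hk
    have hb : f.totalDegree ≤ 1 := by
      apply totalDegree_le_of_coeffs f 1
      intro i hi
      have hcoeff : (finSuccEquiv ℂ 1 f).coeff i =
          (Polynomial.X - Polynomial.C α).coeff i * u.coeff 0 := by
        conv_lhs => rw [hu, hu0]
        rw [Polynomial.coeff_mul_C]
      match i with
      | 0 =>
        rw [hcoeff] at hi ⊢
        simp only [Polynomial.coeff_sub, Polynomial.coeff_X_zero, Polynomial.coeff_C_zero,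
          zero_sub, neg_mul] at hi ⊢
        have hneg : (-(α * u.coeff 0)).totalDegree ≤ (α * u.coeff 0).totalDegree :=
          totalDegree_le_of_support_subset (by rw [MvPolynomial.support_neg])
        have hmul : (α * u.coeff 0).totalDegree ≤ α.totalDegree + (u.coeff 0).totalDegree :=
          totalDegree_mul _ _
        omega
      | 1 =>
        rw [hcoeff]
        simp only [Polynomial.coeff_sub, Polynomial.coeff_X_one, Polynomial.coeff_C,
          one_ne_zero, if_false, sub_zero, one_mul]
        omega
      | (n+2) =>
        exfalso
        apply hi
        rw [hcoeff]
        simp [Polynomial.coeff_X, Polynomial.coeff_C]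
    omega

lemma key_eval (f : MvPolynomial (Fin 2) ℂ) (x t : ℂ) :
    MvPolynomial.eval ![x, t] f =
      Polynomial.eval x (Polynomial.map (MvPolynomial.eval ![t]) (finSuccEquiv ℂ 1 f)) :=
  eval_eq_eval_mv_eval' ![t] x f

lemma eval_r (F : Polynomial (MvPolynomial (Fin 1) ℂ)) (α : MvPolynomial (Fin 1) ℂ) (t : ℂ) :
    MvPolynomial.eval ![t] (Polynomial.eval α F) =
      Polynomial.eval (MvPolynomial.eval ![t] α) (F.map (MvPolynomial.eval ![t])) := by
  rw [Polynomial.eval_map, Polynomial.eval₂_at_apply]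

/-- The intersection of the curve with any "isotropic" line is finite. -/
lemma line_finite (f : MvPolynomial (Fin 2) ℂ) (hf : Irreducible f)
    (hd : 1 < f.totalDegree) (a b c : ℂ) :
    {q : ℂ × ℂ | MvPolynomial.eval ![q.1, q.2] f = 0 ∧ q.1 - a = c * (q.2 - b)}.Finite := by
  set α : MvPolynomial (Fin 1) ℂ :=
    MvPolynomial.C a + MvPolynomial.C c * (MvPolynomial.X 0 - MvPolynomial.C b) with hα_def
  have hα : α.totalDegree ≤ 1 := by
    refine le_trans (totalDegree_add _ _) (max_le (by simp [totalDegree_C]) ?_)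
    refine le_trans (totalDegree_mul _ _) ?_
    have : (MvPolynomial.X 0 - MvPolynomial.C b : MvPolynomial (Fin 1) ℂ).totalDegree ≤ 1 := by
      rw [sub_eq_add_neg, ← map_neg]
      exact le_trans (totalDegree_add _ _)
        (max_le (by simp [totalDegree_X]) (by simp [totalDegree_C]))
    simpa [totalDegree_C] using this
  have hr : Polynomial.eval α (finSuccEquiv ℂ 1 f) ≠ 0 := line_r_ne_zero f hf hd α hα
  have hroots : {t : ℂ | MvPolynomial.eval ![t]
      (Polynomial.eval α (finSuccEquiv ℂ 1 f)) = 0}.Finite := mv1_finite hr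
  apply (hroots.image (fun t => (a + c * (t - b), t))).subset
  rintro q ⟨hq0, hq1⟩
  have hq1' : q.1 = a + c * (q.2 - b) := by linear_combination hq1
  refine ⟨q.2, ?_, ?_⟩
  · show MvPolynomial.eval ![q.2] _ = 0
    rw [eval_r]
    have hevalα : MvPolynomial.eval ![q.2] α = a + c * (q.2 - b) := by
      simp [hα_def]
    rw [hevalα, ← hq1', ← key_eval]
    exact hq0
  · simp [← hq1']

/-- The curve is infinite. -/
lemma curve_infinite (f : MvPolynomial (Fin 2) ℂ) (hd : f.totalDegree ≠ 0) :
    {q : ℂ × ℂ | MvPolynomial.eval ![q.1, q.2] f = 0}.Infinite := by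
  have hf0 : f ≠ 0 := fun h => hd (by simp [h])
  have hnotC : ∀ a : ℂ, f ≠ MvPolynomial.C a := by
    intro a h
    exact hd (by rw [h]; exact totalDegree_C a)
  set F := finSuccEquiv ℂ 1 f with hF
  by_cases h : F.natDegree = 0
  · -- f does not involve the first variable; it's a nonconstant polynomial in the second
    have hFC : F = Polynomial.C (F.coeff 0) := Polynomial.eq_C_of_natDegree_eq_zero h
    have hrC : ∀ a : ℂ, F.coeff 0 ≠ MvPolynomial.C a := by
      intro a ha
      apply hnotC a
      apply (finSuccEquiv ℂ 1).injective
      rw [← hF, hFC, ha]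
      have : (finSuccEquiv ℂ 1) (MvPolynomial.C a) = Polynomial.C (MvPolynomial.C a) := by
        have := (finSuccEquiv ℂ 1).commutes a
        simpa [MvPolynomial.algebraMap_eq, Polynomial.algebraMap_eq] using this
      rw [this]
    obtain ⟨t0, ht0⟩ := mv1_exists_root hrC
    apply Set.infinite_of_injective_forall_mem
      (f := fun x : ℂ => ((x, t0) : ℂ × ℂ))
      (fun x y hxy => (Prod.ext_iff.mp hxy).1)
    intro x
    show MvPolynomial.eval ![x, t0] f = 0
    rw [key_eval, ← hF, hFC]
    simpa using ht0
  · -- positive degree in the first variable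
    have hL : F.leadingCoeff ≠ 0 := fun hL => hf0 (by
      have : F = 0 := Polynomial.leadingCoeff_eq_zero.mp hL
      simpa [hF] using (map_eq_zero_iff _ (finSuccEquiv ℂ 1).injective).mp this)
    have hTfin : {t : ℂ | MvPolynomial.eval ![t] F.leadingCoeff = 0}.Finite := mv1_finite hL
    have hTinf : {t : ℂ | MvPolynomial.eval ![t] F.leadingCoeff = 0}ᶜ.Infinite :=
      hTfin.infinite_compl
    -- for each good t, pick a root in x
    have hroot : ∀ t : ℂ, MvPolynomial.eval ![t] F.leadingCoeff ≠ 0 →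
        ∃ x : ℂ, MvPolynomial.eval ![x, t] f = 0 := by
      intro t ht
      have hQdeg : (F.map (MvPolynomial.eval ![t])).natDegree = F.natDegree :=
        Polynomial.natDegree_map_of_leadingCoeff_ne_zero _ ht
      have hpos : 0 < (F.map (MvPolynomial.eval ![t])).degree :=
        Polynomial.natDegree_pos_iff_degree_pos.mp (by omega)
      obtain ⟨x, hx⟩ := Complex.exists_root hpos
      exact ⟨x, by rw [key_eval, ← hF]; exact hx⟩
    set g : ℂ → ℂ × ℂ := fun t =>
      if h : MvPolynomial.eval ![t] F.leadingCoeff ≠ 0 then (Classical.choose (hroot t h), t)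
      else (0, t) with hg
    apply Set.infinite_of_injOn_mapsTo (f := g)
      (s := {t : ℂ | MvPolynomial.eval ![t] F.leadingCoeff = 0}ᶜ) ?_ ?_ hTinf
    · intro x _ y _ hxy
      have hx2 : ∀ t : ℂ, (g t).2 = t := by
        intro t; rw [hg]; dsimp only; split_ifs <;> rfl
      rw [← hx2 x, ← hx2 y, hxy]
    · intro t ht
      simp only [Set.mem_compl_iff, Set.mem_setOf_eq] at ht
      show g t ∈ _
      rw [hg]
      simp only [dif_pos ht]
      exact Classical.choose_spec (hroot t ht)

/-- The set of points of the curve at isotropic position from one of finitely many points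
is finite. -/
lemma bad_finite (f : MvPolynomial (Fin 2) ℂ) (hf : Irreducible f)
    (hd : 1 < f.totalDegree) {k : ℕ} (v : Fin k → ℂ × ℂ) :
    {q : ℂ × ℂ | MvPolynomial.eval ![q.1, q.2] f = 0 ∧ ∃ i, sqDist (v i) q = 0}.Finite := by
  have hfin : ∀ i : Fin k,
      ({q : ℂ × ℂ | MvPolynomial.eval ![q.1, q.2] f = 0 ∧
          q.1 - (v i).1 = Complex.I * (q.2 - (v i).2)} ∪
       {q : ℂ × ℂ | MvPolynomial.eval ![q.1, q.2] f = 0 ∧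
          q.1 - (v i).1 = -Complex.I * (q.2 - (v i).2)}).Finite := fun i =>
    (line_finite f hf hd (v i).1 (v i).2 Complex.I).union
      (line_finite f hf hd (v i).1 (v i).2 (-Complex.I))
  apply (Set.finite_iUnion hfin).subset
  rintro q ⟨hq, i, hi⟩
  refine Set.mem_iUnion.mpr ⟨i, ?_⟩
  have hi' : ((v i).1 - q.1) ^ 2 + ((v i).2 - q.2) ^ 2 = 0 := hi
  have hfac : (q.1 - (v i).1 - Complex.I * (q.2 - (v i).2)) *
      (q.1 - (v i).1 + Complex.I * (q.2 - (v i).2)) = 0 := by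
    linear_combination hi' - (q.2 - (v i).2) ^ 2 * Complex.I_sq
  rcases mul_eq_zero.mp hfac with h | h
  · exact Or.inl ⟨hq, by linear_combination h⟩
  · exact Or.inr ⟨hq, by linear_combination h⟩

end GenericTupleAux

open GenericTupleAux in
theorem generic_tuple_in_Wn (C : Set (ℂ × ℂ)) (hC : IsPlaneCurve C) (n : ℕ) (hn : 1 < n)
    (p : Fin (n - 1) → ℂ × ℂ) (hpC : ∀ i, p i ∈ C)
    (hpW : ∀ j k : Fin (n - 1), j < k → sqDist (p j) (p k) ≠ 0) :
    {q ∈ C | ∃ i : Fin (n - 1), sqDist (p i) q = 0}.Finite ∧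
    (∃ pn ∈ C, ∀ i : Fin (n - 1), sqDist (p i) pn ≠ 0) ∧
    (∀ m : ℕ, 1 ≤ m → ∃ q : Fin m → ℂ × ℂ, (∀ i, q i ∈ C) ∧
      ∀ i j : Fin m, i < j → sqDist (q i) (q j) ≠ 0) := by
  obtain ⟨f, hirr, hdeg, rfl⟩ := hC
  have hinf : {q : ℂ × ℂ | MvPolynomial.eval ![q.1, q.2] f = 0}.Infinite :=
    curve_infinite f (by omega)
  -- a reusable step: given finitely many points, find a fresh point of the curve
  have fresh : ∀ {k : ℕ} (v : Fin k → ℂ × ℂ),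
      ∃ z, z ∈ {q : ℂ × ℂ | MvPolynomial.eval ![q.1, q.2] f = 0} ∧
        ∀ i, sqDist (v i) z ≠ 0 := by
    intro k v
    obtain ⟨z, hz1, hz2⟩ := (hinf.diff (bad_finite f hirr hdeg v)).nonempty
    refine ⟨z, hz1, fun i hzero => hz2 ⟨hz1, i, hzero⟩⟩
  refine ⟨?_, ?_, ?_⟩
  · exact bad_finite f hirr hdeg p
  · obtain ⟨z, hz1, hz2⟩ := fresh p
    exact ⟨z, hz1, hz2⟩
  · have key : ∀ m : ℕ, ∃ q : Fin m → ℂ × ℂ,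
        (∀ i, q i ∈ {q : ℂ × ℂ | MvPolynomial.eval ![q.1, q.2] f = 0}) ∧
        ∀ i j : Fin m, i < j → sqDist (q i) (q j) ≠ 0 := by
      intro m
      induction m with
      | zero => exact ⟨fun i => i.elim0, fun i => i.elim0, fun i => i.elim0⟩
      | succ m ih =>
        obtain ⟨q, hqC, hqW⟩ := ih
        obtain ⟨z, hz1, hz2⟩ := fresh q
        refine ⟨Fin.snoc q z, ?_, ?_⟩
        · intro i
          refine Fin.lastCases ?_ ?_ i
          · rw [Fin.snoc_last]; exact hz1
          · intro j; rw [Fin.snoc_castSucc]; exact hqC j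
        · intro i j hij
          revert hij
          refine Fin.lastCases ?_ (fun j' => ?_) j
          all_goals intro hij'
          · have hne : i ≠ Fin.last m := Fin.ne_last_of_lt hij'
            rw [Fin.snoc_last, ← Fin.castSucc_castPred i hne, Fin.snoc_castSucc]
            exact hz2 _
          · have hne : i ≠ Fin.last m := Fin.ne_last_of_lt (hij'.trans (Fin.castSucc_lt_last j'))
            rw [← Fin.castSucc_castPred i hne, Fin.snoc_castSucc, Fin.snoc_castSucc]
            exact hqW _ _ (by
              have := hij'
              rw [← Fin.castSucc_castPred i hne] at this
              exact (Fin.castSucc_lt_castSucc_iff).mp this)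
    intro m _
    exact key m
end
end

section
/- Let p₁, p₂ ∈ ℂ² with d(p₁,p₂) ≠ 0. Then the stabilizer of (p₁,p₂) in E(ℂ), i.e., the set of pairs (A, v) with A a 2×2 complex matrix satisfying AᵀA = I and v ∈ ℂ² such that A p₁ + v = p₁ and A p₂ + v = p₂, has at most two elements; in particular it is finite. -/
open scoped Matrix

noncomputable section

theorem stabilizer_pair_finite (p₁ p₂ : ℂ × ℂ) (h : sqDist p₁ p₂ ≠ 0) :
    {g : Matrix (Fin 2) (Fin 2) ℂ × (ℂ × ℂ) |
        IsOrtho g.1 ∧ euclApply g.1 g.2 p₁ = p₁ ∧ euclApply g.1 g.2 p₂ = p₂}.Finite ∧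
    {g : Matrix (Fin 2) (Fin 2) ℂ × (ℂ × ℂ) |
        IsOrtho g.1 ∧ euclApply g.1 g.2 p₁ = p₁ ∧ euclApply g.1 g.2 p₂ = p₂}.ncard ≤ 2 := by
  obtain ⟨w₁, hw1⟩ : ∃ x : ℂ, x = p₁.1 - p₂.1 := ⟨_, rfl⟩
  obtain ⟨w₂, hw2⟩ : ∃ x : ℂ, x = p₁.2 - p₂.2 := ⟨_, rfl⟩
  obtain ⟨s, hsdef⟩ : ∃ x : ℂ, x = w₁ ^ 2 + w₂ ^ 2 := ⟨_, rfl⟩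
  have hs : s ≠ 0 := by rw [hsdef, hw1, hw2]; exact h
  obtain ⟨aR, haR⟩ : ∃ x : ℂ, x = (w₁ ^ 2 - w₂ ^ 2) / s := ⟨_, rfl⟩
  obtain ⟨cR, hcR⟩ : ∃ x : ℂ, x = 2 * w₁ * w₂ / s := ⟨_, rfl⟩
  obtain ⟨R, hR⟩ : ∃ M : Matrix (Fin 2) (Fin 2) ℂ, M = ![![aR, cR], ![cR, -aR]] := ⟨_, rfl⟩
  obtain ⟨V, hV⟩ : ∃ u : ℂ × ℂ,
      u = (p₁.1 - (aR * p₁.1 + cR * p₁.2), p₁.2 - (cR * p₁.1 + -aR * p₁.2)) := ⟨_, rfl⟩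
  have hsub : {g : Matrix (Fin 2) (Fin 2) ℂ × (ℂ × ℂ) |
        IsOrtho g.1 ∧ euclApply g.1 g.2 p₁ = p₁ ∧ euclApply g.1 g.2 p₂ = p₂} ⊆
      {((1 : Matrix (Fin 2) (Fin 2) ℂ), ((0:ℂ), (0:ℂ))), (R, V)} := by
    rintro ⟨A, v⟩ ⟨ho, hf1, hf2⟩
    have o1 := congrFun (congrFun ho 0) 0
    have o2 := congrFun (congrFun ho 0) 1
    have o3 := congrFun (congrFun ho 1) 1
    simp only [Matrix.mul_apply, Matrix.one_apply, Fin.sum_univ_two, Matrix.transpose_apply,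
      if_pos rfl, Fin.isValue, ne_eq, zero_ne_one, not_false_eq_true, if_neg,
      one_ne_zero, ite_true, ite_false, reduceIte] at o1 o2 o3
    have f1 : A 0 0 * p₁.1 + A 0 1 * p₁.2 + v.1 = p₁.1 := congrArg Prod.fst hf1
    have f2 : A 1 0 * p₁.1 + A 1 1 * p₁.2 + v.2 = p₁.2 := congrArg Prod.snd hf1
    have f3 : A 0 0 * p₂.1 + A 0 1 * p₂.2 + v.1 = p₂.1 := congrArg Prod.fst hf2
    have f4 : A 1 0 * p₂.1 + A 1 1 * p₂.2 + v.2 = p₂.2 := congrArg Prod.snd hf2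
    have e1 : A 0 0 * w₁ + A 0 1 * w₂ = w₁ := by rw [hw1, hw2]; linear_combination f1 - f3
    have e2 : A 1 0 * w₁ + A 1 1 * w₂ = w₂ := by rw [hw1, hw2]; linear_combination f2 - f4
    have hdet2 : (A 0 0 * A 1 1 - A 0 1 * A 1 0 - 1) * (A 0 0 * A 1 1 - A 0 1 * A 1 0 + 1) = 0 := by
      linear_combination (A 0 1 ^ 2 + A 1 1 ^ 2) * o1 + o3 - (A 0 0 * A 0 1 + A 1 0 * A 1 1) * o2
    simp only [Set.mem_insert_iff, Set.mem_singleton_iff]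
    rcases mul_eq_zero.mp hdet2 with hdet | hdet
    · -- rotation case : A = 1, v = 0
      left
      have hdet' : A 0 0 * A 1 1 - A 0 1 * A 1 0 = 1 := by linear_combination hdet
      have hb : A 0 1 = -(A 1 0) := by
        linear_combination A 0 0 * o2 - A 1 0 * hdet' - A 0 1 * o1
      have hd : A 1 1 = A 0 0 := by
        linear_combination A 0 0 * hdet' + A 1 0 * o2 - A 1 1 * o1
      have E1 : (A 0 0 - 1) * w₁ - A 1 0 * w₂ = 0 := by linear_combination e1 - w₂ * hb
      have E2 : A 1 0 * w₁ + (A 0 0 - 1) * w₂ = 0 := by linear_combination e2 - w₂ * hd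
      have hsa : (2 - 2 * A 0 0) * s = 0 := by
        rw [hsdef]
        linear_combination ((A 0 0 - 1) * w₁ - A 1 0 * w₂) * E1 +
          (A 1 0 * w₁ + (A 0 0 - 1) * w₂) * E2 - (w₁ ^ 2 + w₂ ^ 2) * o1
      have ha1 : A 0 0 = 1 := by
        rcases mul_eq_zero.mp hsa with h' | h'
        · linear_combination -h' / 2
        · exact absurd h' hs
      have hc0 : A 1 0 = 0 := by
        have hsq : A 1 0 ^ 2 = 0 := by linear_combination o1 - (A 0 0 + 1) * ha1
        exact pow_eq_zero_iff (by norm_num) |>.mp hsq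
      have hb0 : A 0 1 = 0 := by rw [hb, hc0, neg_zero]
      have hd1 : A 1 1 = 1 := by rw [hd, ha1]
      have hv1 : v.1 = 0 := by linear_combination f1 - p₁.1 * ha1 - p₁.2 * hb0
      have hv2 : v.2 = 0 := by linear_combination f2 - p₁.1 * hc0 - p₁.2 * hd1
      refine Prod.ext ?_ (Prod.ext hv1 hv2)
      ext i j
      fin_cases i <;> fin_cases j <;>
        simp [Matrix.one_apply, ha1, hb0, hc0, hd1]
    · -- reflection case : A = R
      right
      have hdet' : A 0 0 * A 1 1 - A 0 1 * A 1 0 = -1 := by linear_combination hdet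
      have hb : A 0 1 = A 1 0 := by
        linear_combination A 0 0 * o2 - A 1 0 * hdet' - A 0 1 * o1
      have hd : A 1 1 = -(A 0 0) := by
        linear_combination A 0 0 * hdet' + A 1 0 * o2 - A 1 1 * o1
      have E1 : (A 0 0 - 1) * w₁ + A 1 0 * w₂ = 0 := by linear_combination e1 - w₂ * hb
      have E2 : A 1 0 * w₁ - (A 0 0 + 1) * w₂ = 0 := by linear_combination e2 - w₂ * hd
      have ha : A 0 0 = aR := by
        rw [haR, eq_div_iff hs, hsdef]
        linear_combination w₁ * E1 - w₂ * E2
      have hc : A 1 0 = cR := by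
        rw [hcR, eq_div_iff hs, hsdef]
        linear_combination w₂ * E1 + w₁ * E2
      have hbR : A 0 1 = cR := by rw [hb, hc]
      have hdR : A 1 1 = -aR := by rw [hd, ha]
      have hv1 : v.1 = V.1 := by
        rw [hV]
        linear_combination f1 - p₁.1 * ha - p₁.2 * hbR
      have hv2 : v.2 = V.2 := by
        rw [hV]
        linear_combination f2 - p₁.1 * hc - p₁.2 * hdR
      refine Prod.ext ?_ (Prod.ext hv1 hv2)
      rw [hR]
      ext i j
      fin_cases i <;> fin_cases j <;>
        simp [ha, hbR, hc, hdR]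
  have hfin : ({((1 : Matrix (Fin 2) (Fin 2) ℂ), ((0:ℂ), (0:ℂ))), (R, V)} :
      Set (Matrix (Fin 2) (Fin 2) ℂ × (ℂ × ℂ))).Finite :=
    (Set.finite_singleton _).insert _
  refine ⟨hfin.subset hsub, le_trans (Set.ncard_le_ncard hsub hfin) ?_⟩
  calc ({((1 : Matrix (Fin 2) (Fin 2) ℂ), ((0:ℂ), (0:ℂ))), (R, V)} :
      Set (Matrix (Fin 2) (Fin 2) ℂ × (ℂ × ℂ))).ncard
      ≤ ({(R, V)} : Set (Matrix (Fin 2) (Fin 2) ℂ × (ℂ × ℂ))).ncard + 1 :=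
        Set.ncard_insert_le _ _
    _ ≤ 2 := by rw [Set.ncard_singleton]
end
end

section
/- Let C₀, C₁ ⊆ ℂ² be plane algebraic curves and suppose there exist points p₁, p₂ lying on both C₀ and C₁ with d(p₁,p₂) ≠ 0, such that the sets {(d(p₁,q), d(p₂,q)) : q ∈ C₀} and {(d(p₁,q), d(p₂,q)) : q ∈ C₁} are equal. Then there exists h ∈ E(ℂ) with h·p₁ = p₁ and h·p₂ = p₂ such that C₀ = h·C₁ (equality of subsets of ℂ²). -/
open scoped Matrix

noncomputable section

/-! Two points at the same squared distances from `p₁` and `p₂` coincide or are mirror images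
under the reflection `σ` in the line `p₁p₂` (which is a complex Euclidean motion since
`d(p₁, p₂) ≠ 0`). Hence `C₀ ⊆ C₁ ∪ σ(C₁)`, i.e. the equation `f` of `C₀` vanishes wherever
`g · (g ∘ σ)` does, `g` being the equation of `C₁`. By the Nullstellensatz the prime `f` divides
`g` or `g ∘ σ`, both irreducible, so `C₀ = C₁` or `C₀ = σ(C₁)`. -/

namespace MvPolynomial

theorem eval_eq_zero_iff_of_dvd {R σ : Type*} [CommRing R] {f g : MvPolynomial σ R}
    (hf : ¬IsUnit f) (hg : Irreducible g) (hfg : f ∣ g) (x : σ → R) :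
    eval x g = 0 ↔ eval x f = 0 := by
  obtain ⟨u, rfl⟩ := hfg
  have hu : IsUnit u := (hg.isUnit_or_isUnit rfl).resolve_left hf
  rw [map_mul, (hu.map (eval x)).mul_left_eq_zero]

theorem dvd_of_forall_eval_eq_zero {k σ : Type*} [Field k] [IsAlgClosed k] [Finite σ]
    {f g : MvPolynomial σ k} (hf : Prime f) (h : ∀ x, eval x f = 0 → eval x g = 0) :
    f ∣ g := by
  have hprime : (Ideal.span {f}).IsPrime := (Ideal.span_singleton_prime hf.ne_zero).mpr hf
  rw [← Ideal.mem_span_singleton, ← hprime.radical,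
    ← vanishingIdeal_zeroLocus_eq_radical (K := k), mem_vanishingIdeal_iff]
  intro x hx
  exact h x (mem_zeroLocus_iff.mp hx f (Ideal.mem_span_singleton_self f))

end MvPolynomial

open MvPolynomial

def planeZeroSet (f : MvPolynomial (Fin 2) ℂ) : Set (ℂ × ℂ) := {p | eval ![p.1, p.2] f = 0}

theorem planeZeroSet_eq_or_eq_of_subset_union {f g₁ g₂ : MvPolynomial (Fin 2) ℂ}
    (hf : Irreducible f) (hg₁ : Irreducible g₁) (hg₂ : Irreducible g₂)
    (h : planeZeroSet f ⊆ planeZeroSet g₁ ∪ planeZeroSet g₂) :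
    planeZeroSet f = planeZeroSet g₁ ∨ planeZeroSet f = planeZeroSet g₂ := by
  have hdvd : f ∣ g₁ * g₂ := dvd_of_forall_eval_eq_zero hf.prime <|
    (finTwoArrowEquiv ℂ).symm.forall_congr_right.mp fun p hp => by
      rw [map_mul, mul_eq_zero]
      exact h hp
  refine (hf.prime.dvd_or_dvd hdvd).imp (fun h₁ => ?_) (fun h₂ => ?_) <;> ext p
  · exact (eval_eq_zero_iff_of_dvd hf.not_isUnit hg₁ h₁ _).symm
  · exact (eval_eq_zero_iff_of_dvd hf.not_isUnit hg₂ h₂ _).symm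

section Pullback

def euclPullback (A : Matrix (Fin 2) (Fin 2) ℂ) (v : ℂ × ℂ) :
    MvPolynomial (Fin 2) ℂ →ₐ[ℂ] MvPolynomial (Fin 2) ℂ :=
  bind₁ ![C (A 0 0) * X 0 + C (A 0 1) * X 1 + C v.1, C (A 1 0) * X 0 + C (A 1 1) * X 1 + C v.2]

variable {A : Matrix (Fin 2) (Fin 2) ℂ} {v : ℂ × ℂ}

theorem eval_euclPullback (p : ℂ × ℂ) (f : MvPolynomial (Fin 2) ℂ) :
    eval ![p.1, p.2] (euclPullback A v f) =
      eval ![(euclApply A v p).1, (euclApply A v p).2] f := by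
  refine (eval₂Hom_bind₁ _ _ _ _).trans (congrArg (eval · f) ?_)
  ext i
  fin_cases i <;> simp [euclApply]

theorem planeZeroSet_euclPullback (f : MvPolynomial (Fin 2) ℂ) :
    planeZeroSet (euclPullback A v f) = euclApply A v ⁻¹' planeZeroSet f := by
  ext p
  exact (congrArg (· = 0) (eval_euclPullback p f)).to_iff

theorem euclPullback_euclPullback (h : Function.Involutive (euclApply A v))
    (f : MvPolynomial (Fin 2) ℂ) : euclPullback A v (euclPullback A v f) = f :=
  MvPolynomial.funext <| (finTwoArrowEquiv ℂ).symm.forall_congr_right.mp fun p => by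
    simp only [finTwoArrowEquiv_symm_apply, eval_euclPullback, h p]

theorem irreducible_euclPullback (h : Function.Involutive (euclApply A v))
    {f : MvPolynomial (Fin 2) ℂ} (hf : Irreducible f) : Irreducible (euclPullback A v f) := by
  have hinv : (euclPullback A v).comp (euclPullback A v) = AlgHom.id ℂ _ :=
    AlgHom.ext fun g => euclPullback_euclPullback h g
  exact hf.map (AlgEquiv.ofAlgHom _ _ hinv hinv)

end Pullback

theorem euclApply_one_zero : euclApply 1 0 = id := by
  funext p
  simp [euclApply]

theorem isOrtho_householder {c n₁ n₂ : ℂ} (hc : c * (n₁ ^ 2 + n₂ ^ 2) = 2) :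
    IsOrtho !![1 - c * n₁ * n₁, -(c * n₁ * n₂); -(c * n₂ * n₁), 1 - c * n₂ * n₂] := by
  rw [IsOrtho, Matrix.one_fin_two]
  ext i j
  fin_cases i <;> fin_cases j <;>
    simp only [Matrix.mul_apply, Fin.sum_univ_two, Matrix.transpose_apply, Matrix.of_apply,
      Matrix.cons_val', Matrix.cons_val_zero, Matrix.cons_val_one, Matrix.cons_val_fin_one,
      Fin.zero_eta, Fin.mk_one]
  · linear_combination c * n₁ ^ 2 * hc
  · linear_combination c * n₁ * n₂ * hc
  · linear_combination c * n₁ * n₂ * hc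
  · linear_combination c * n₂ ^ 2 * hc

section LineReflection

variable (p₁ p₂ : ℂ × ℂ)

def lineNormal : ℂ × ℂ := (p₁.2 - p₂.2, p₂.1 - p₁.1)

def lineOffset (z : ℂ × ℂ) : ℂ :=
  (z.1 - p₁.1) * (lineNormal p₁ p₂).1 + (z.2 - p₁.2) * (lineNormal p₁ p₂).2

/-- The reflection in the line through `p₁` and `p₂`: with `n = lineNormal p₁ p₂` it is
`z ↦ z - 2 ⟪z - p₁, n⟫ / ⟪n, n⟫ • n`, where `⟪n, n⟫ = sqDist p₁ p₂`. -/
def lineReflection (z : ℂ × ℂ) : ℂ × ℂ :=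
  z - (2 * lineOffset p₁ p₂ z / sqDist p₁ p₂) • lineNormal p₁ p₂

theorem lineReflection_left : lineReflection p₁ p₂ p₁ = p₁ := by
  simp [lineReflection, lineOffset]

theorem lineReflection_right : lineReflection p₁ p₂ p₂ = p₂ := by
  have h : lineOffset p₁ p₂ p₂ = 0 := by
    simp only [lineOffset, lineNormal]
    ring
  simp [lineReflection, h]

variable {p₁ p₂}

theorem lineOffset_lineReflection (hd : sqDist p₁ p₂ ≠ 0) (z : ℂ × ℂ) :
    lineOffset p₁ p₂ (lineReflection p₁ p₂ z) = -lineOffset p₁ p₂ z := by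
  simp only [lineReflection, lineOffset, lineNormal, Prod.fst_sub, Prod.snd_sub, Prod.smul_fst,
    Prod.smul_snd, smul_eq_mul]
  unfold sqDist at hd ⊢
  field_simp
  ring

theorem lineReflection_involutive (hd : sqDist p₁ p₂ ≠ 0) :
    Function.Involutive (lineReflection p₁ p₂) := fun z => by
  rw [lineReflection, lineOffset_lineReflection hd, lineReflection]
  module

theorem exists_isOrtho_euclApply_eq_lineReflection (hd : sqDist p₁ p₂ ≠ 0) :
    ∃ (A : Matrix (Fin 2) (Fin 2) ℂ) (v : ℂ × ℂ),
      IsOrtho A ∧ euclApply A v = lineReflection p₁ p₂ := by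
  set n := lineNormal p₁ p₂
  set c := 2 / sqDist p₁ p₂
  have hc : c * (n.1 ^ 2 + n.2 ^ 2) = 2 := by
    simp only [c, n, lineNormal]
    unfold sqDist at hd ⊢
    field_simp
    ring
  refine ⟨!![1 - c * n.1 * n.1, -(c * n.1 * n.2); -(c * n.2 * n.1), 1 - c * n.2 * n.2],
    -(c * lineOffset p₁ p₂ 0) • n, isOrtho_householder hc, ?_⟩
  funext z
  ext <;>
    simp only [euclApply, lineReflection, lineOffset, c, n, Matrix.of_apply, Matrix.cons_val',
      Matrix.cons_val_zero, Matrix.cons_val_one, Matrix.cons_val_fin_one, Prod.fst_sub,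
      Prod.snd_sub, Prod.smul_fst, Prod.smul_snd, Prod.fst_zero, Prod.snd_zero, smul_eq_mul] <;>
    ring

theorem eq_or_eq_lineReflection_of_sqDist_eq (hd : sqDist p₁ p₂ ≠ 0) {q z : ℂ × ℂ}
    (h₁ : sqDist p₁ q = sqDist p₁ z) (h₂ : sqDist p₂ q = sqDist p₂ z) :
    q = z ∨ q = lineReflection p₁ p₂ z := by
  obtain ⟨a₁, a₂⟩ := p₁
  obtain ⟨b₁, b₂⟩ := p₂
  obtain ⟨q₁, q₂⟩ := q
  obtain ⟨z₁, z₂⟩ := z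
  unfold sqDist at hd h₁ h₂
  dsimp only at hd h₁ h₂
  set s := (a₁ - b₁) ^ 2 + (a₂ - b₂) ^ 2
  set T := (q₁ - z₁) * (a₂ - b₂) + (q₂ - z₂) * (b₁ - a₁)
  set W := (z₁ - a₁) * (a₂ - b₂) + (z₂ - a₂) * (b₁ - a₁)
  -- `q - z` is orthogonal to `p₂ - p₁`, so `s • (q - z) = T • lineNormal p₁ p₂`; substituting
  -- this into `|q - p₁|² = |z - p₁|²` leaves `T (T + 2 W) = 0`.
  have hL : (q₁ - z₁) * (b₁ - a₁) + (q₂ - z₂) * (b₂ - a₂) = 0 := by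
    linear_combination (h₁ - h₂) / 2
  have hT₁ : s * (q₁ - z₁) = T * (a₂ - b₂) := by linear_combination (b₁ - a₁) * hL
  have hT₂ : s * (q₂ - z₂) = T * (b₁ - a₁) := by linear_combination (b₂ - a₂) * hL
  have hT : T * (T + 2 * W) = 0 := by
    linear_combination s * h₁ - (2 * (z₁ - a₁) * (b₁ - a₁) + 2 * (z₂ - a₂) * (b₂ - a₂) +
      (q₁ - z₁) * (b₁ - a₁) + (q₂ - z₂) * (b₂ - a₂)) * hL
  rcases mul_eq_zero.mp hT with hT | hT
  · left
    rw [hT, zero_mul] at hT₁ hT₂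
    ext
    · exact sub_eq_zero.mp ((mul_eq_zero.mp hT₁).resolve_left hd)
    · exact sub_eq_zero.mp ((mul_eq_zero.mp hT₂).resolve_left hd)
  · right
    have hq₁ : q₁ = z₁ - 2 * W / s * (a₂ - b₂) := by
      field_simp
      linear_combination hT₁ + (a₂ - b₂) * hT
    have hq₂ : q₂ = z₂ - 2 * W / s * (b₁ - a₁) := by
      field_simp
      linear_combination hT₂ + (b₁ - a₁) * hT
    exact Prod.ext hq₁ hq₂

end LineReflection

theorem curves_equal_of_two_point_slice_general (C₀ C₁ : Set (ℂ × ℂ))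
    (hC₀ : IsPlaneCurve C₀) (hC₁ : IsPlaneCurve C₁)
    (p₁ p₂ : ℂ × ℂ)
    (hd : sqDist p₁ p₂ ≠ 0)
    (hslice : {x : ℂ × ℂ | ∃ q ∈ C₀, x = (sqDist p₁ q, sqDist p₂ q)} =
              {x : ℂ × ℂ | ∃ q ∈ C₁, x = (sqDist p₁ q, sqDist p₂ q)}) :
    ∃ (A : Matrix (Fin 2) (Fin 2) ℂ) (v : ℂ × ℂ), IsOrtho A ∧
      euclApply A v p₁ = p₁ ∧ euclApply A v p₂ = p₂ ∧ C₀ = euclApply A v '' C₁ := by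
  obtain ⟨f, hf, -, rfl⟩ := hC₀
  obtain ⟨g, hg, -, rfl⟩ := hC₁
  obtain ⟨A, v, hA, hσ⟩ := exists_isOrtho_euclApply_eq_lineReflection hd
  have hinv : Function.Involutive (euclApply A v) := hσ ▸ lineReflection_involutive hd
  have hcover : planeZeroSet f ⊆ planeZeroSet g ∪ planeZeroSet (euclPullback A v g) := by
    intro z hz
    obtain ⟨q, hq, hqz⟩ : (sqDist p₁ z, sqDist p₂ z) ∈
        {x | ∃ q ∈ planeZeroSet g, x = (sqDist p₁ q, sqDist p₂ q)} := hslice ▸ ⟨z, hz, rfl⟩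
    obtain ⟨h₁, h₂⟩ := Prod.mk.inj hqz
    rw [planeZeroSet_euclPullback, hσ]
    rcases eq_or_eq_lineReflection_of_sqDist_eq hd h₁.symm h₂.symm with rfl | rfl
    exacts [Or.inl hq, Or.inr hq]
  rcases planeZeroSet_eq_or_eq_of_subset_union hf hg (irreducible_euclPullback hinv hg) hcover
    with h | h
  · refine ⟨1, 0, by simp [IsOrtho], ?_, ?_, ?_⟩ <;> rw [euclApply_one_zero]
    exacts [rfl, rfl, h.trans (Set.image_id _).symm]
  · refine ⟨A, v, hA, hσ ▸ lineReflection_left p₁ p₂, hσ ▸ lineReflection_right p₁ p₂, ?_⟩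
    change planeZeroSet f = euclApply A v '' planeZeroSet g
    rw [h, planeZeroSet_euclPullback, hinv.image_eq_preimage_symm]

theorem curves_equal_of_two_point_slice (C₀ C₁ : Set (ℂ × ℂ))
    (hC₀ : IsPlaneCurve C₀) (hC₁ : IsPlaneCurve C₁)
    (p₁ p₂ : ℂ × ℂ) (hp₁₀ : p₁ ∈ C₀) (hp₁₁ : p₁ ∈ C₁) (hp₂₀ : p₂ ∈ C₀) (hp₂₁ : p₂ ∈ C₁)
    (hd : sqDist p₁ p₂ ≠ 0)
    (hslice : {x : ℂ × ℂ | ∃ q ∈ C₀, x = (sqDist p₁ q, sqDist p₂ q)} =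
              {x : ℂ × ℂ | ∃ q ∈ C₁, x = (sqDist p₁ q, sqDist p₂ q)}) :
    ∃ (A : Matrix (Fin 2) (Fin 2) ℂ) (v : ℂ × ℂ), IsOrtho A ∧
      euclApply A v p₁ = p₁ ∧ euclApply A v p₂ = p₂ ∧ C₀ = euclApply A v '' C₁ :=
  curves_equal_of_two_point_slice_general C₀ C₁ hC₀ hC₁ p₁ p₂ hd hslice
end
end

section
/- Let C ⊆ ℂ² be a plane algebraic curve (the zero set of an irreducible polynomial of total degree greater than 1). Then the squared distance function is not constant on C × C: there exist points p₁, p₂, q₁, q₂ ∈ C with d(p₁,p₂) ≠ d(q₁,q₂). -/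
open scoped Matrix

noncomputable section

/-!
If `sqDist` were constant on `C × C`, then, `C` being nonempty by the Nullstellensatz, the constant
would be `sqDist q q = 0` for a point `q ∈ C`, so `C` would lie on the two isotropic lines
`x - q₁ ± i (y - q₂) = 0` through `q`, whose product is `(x - q₁)² + (y - q₂)²`. By the
Nullstellensatz the prime defining polynomial then divides one of these linear polynomials,
so its total degree is at most `1`.
-/

namespace MvPolynomial

variable {σ K : Type*} [Field K] [IsAlgClosed K] [Finite σ]

theorem exists_eval_eq_zero_of_not_isUnit {f : MvPolynomial σ K} (hf : ¬IsUnit f) :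
    ∃ x, eval x f = 0 := by
  obtain ⟨M, hM, hfM⟩ := Ideal.exists_le_maximal _ (Ideal.span_singleton_ne_top hf)
  obtain ⟨x, rfl⟩ := isMaximal_iff_eq_vanishingIdeal_singleton.mp hM
  exact ⟨x, (mem_vanishingIdeal_singleton_iff x f).mp (hfM (Ideal.mem_span_singleton_self f))⟩

theorem dvd_of_prime_of_forall_eval_eq_zero {f g : MvPolynomial σ K} (hf : Prime f)
    (h : ∀ x, eval x f = 0 → eval x g = 0) : f ∣ g := by
  have : (Ideal.span {f}).IsPrime := (Ideal.span_singleton_prime hf.ne_zero).mpr hf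
  rw [← Ideal.mem_span_singleton, ← IsPrime.vanishingIdeal_zeroLocus (K := K) (Ideal.span {f}),
    zeroLocus_span, mem_vanishingIdeal_iff]
  exact fun x hx ↦ h x (by simpa using hx)

end MvPolynomial

open MvPolynomial

theorem sqDist_self (p : ℂ × ℂ) : sqDist p p = 0 := by
  simp [sqDist]

def isotropicLine (q : ℂ × ℂ) (c : ℂ) : MvPolynomial (Fin 2) ℂ :=
  X 0 - C q.1 + C c * (X 1 - C q.2)

theorem eval_isotropicLine (q : ℂ × ℂ) (c : ℂ) (x : Fin 2 → ℂ) :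
    eval x (isotropicLine q c) = x 0 - q.1 + c * (x 1 - q.2) := by
  simp [isotropicLine]

theorem sqDist_eq_eval_isotropicLine_mul (q : ℂ × ℂ) (x : Fin 2 → ℂ) :
    sqDist (x 0, x 1) q =
      eval x (isotropicLine q Complex.I * isotropicLine q (-Complex.I)) := by
  rw [map_mul, eval_isotropicLine, eval_isotropicLine, sqDist]
  linear_combination (x 1 - q.2) ^ 2 * Complex.I_sq

theorem isotropicLine_ne_zero (q : ℂ × ℂ) (c : ℂ) : isotropicLine q c ≠ 0 := by
  intro h
  simpa [eval_isotropicLine] using congrArg (eval ![q.1 + 1, q.2]) h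

theorem totalDegree_isotropicLine_le (q : ℂ × ℂ) (c : ℂ) :
    (isotropicLine q c).totalDegree ≤ 1 := by
  have hX (i : Fin 2) : (X i : MvPolynomial (Fin 2) ℂ) ∈ restrictTotalDegree (Fin 2) ℂ 1 := by
    simp [mem_restrictTotalDegree]
  have hC (a : ℂ) : (C a : MvPolynomial (Fin 2) ℂ) ∈ restrictTotalDegree (Fin 2) ℂ 1 := by
    simp [mem_restrictTotalDegree]
  rw [← mem_restrictTotalDegree, isotropicLine, C_mul']
  exact add_mem (sub_mem (hX 0) (hC _)) (Submodule.smul_mem _ _ (sub_mem (hX 1) (hC _)))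

theorem totalDegree_le_one_of_dvd_isotropicLine {f : MvPolynomial (Fin 2) ℂ} {q : ℂ × ℂ} {c : ℂ}
    (h : f ∣ isotropicLine q c) : f.totalDegree ≤ 1 :=
  (totalDegree_le_of_dvd_of_isDomain h (isotropicLine_ne_zero q c)).trans
    (totalDegree_isotropicLine_le q c)

theorem sqDist_not_constant_on_curve (C : Set (ℂ × ℂ)) (hC : IsPlaneCurve C) :
    ∃ p₁ ∈ C, ∃ p₂ ∈ C, ∃ q₁ ∈ C, ∃ q₂ ∈ C, sqDist p₁ p₂ ≠ sqDist q₁ q₂ := by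
  obtain ⟨f, hf, hdeg, rfl⟩ := hC
  by_contra! hconst
  have mem_curve (x : Fin 2 → ℂ) (hx : eval x f = 0) :
      (x 0, x 1) ∈ {p : ℂ × ℂ | eval ![p.1, p.2] f = 0} := by
    show eval ![x 0, x 1] f = 0
    rwa [show ![x 0, x 1] = x from FinVec.etaExpand_eq x]
  obtain ⟨x₀, hx₀⟩ := exists_eval_eq_zero_of_not_isUnit hf.not_isUnit
  set q : ℂ × ℂ := (x₀ 0, x₀ 1)
  have hq := mem_curve x₀ hx₀
  have hdvd : f ∣ isotropicLine q Complex.I * isotropicLine q (-Complex.I) :=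
    dvd_of_prime_of_forall_eval_eq_zero hf.prime fun x hx ↦ by
      rw [← sqDist_eq_eval_isotropicLine_mul, hconst _ (mem_curve x hx) q hq q hq q hq, sqDist_self]
  obtain h | h := hf.prime.dvd_or_dvd hdvd <;>
    exact hdeg.not_ge (totalDegree_le_one_of_dvd_isotropicLine h)

end
end

section
/- Let C ⊆ ℂ² be a plane algebraic curve and let p = (p₁,p₂,p₃,p₄) ∈ C⁴ be a 4-tuple with d(pⱼ,pₖ) ≠ 0 for all 1 ≤ j < k ≤ 4, and suppose p₁, p₂, p₃ are non-collinear. Then the fiber of d₄ over d₄(p) intersected with C⁴ equals the orbit of p under the diagonal action of E(ℂ) intersected with C⁴: a 4-tuple q ∈ C⁴ satisfies d₄(q) = d₄(p) with all pairwise squared distances of q nonzero if and only if there exists g ∈ E(ℂ) with g·pᵢ = qᵢ for i = 1,2,3,4 and all qᵢ ∈ C. -/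
open scoped Matrix

noncomputable section

lemma sqDist_eucl (A : Matrix (Fin 2) (Fin 2) ℂ) (hA : IsOrtho A) (v : ℂ × ℂ) (u w : ℂ × ℂ) :
    sqDist (euclApply A v u) (euclApply A v w) = sqDist u w := by
  have h00 := congrFun (congrFun hA 0) 0
  have h01 := congrFun (congrFun hA 0) 1
  have h11 := congrFun (congrFun hA 1) 1
  simp [Matrix.mul_apply, Fin.sum_univ_two, Matrix.one_apply, Matrix.transpose_apply] at h00 h01 h11
  simp only [sqDist, euclApply]
  linear_combination ((u.1-w.1)^2) * h00 + (2*(u.1-w.1)*(u.2-w.2)) * h01 + ((u.2-w.2)^2) * h11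

lemma sq_factor (u w : ℂ × ℂ) :
    sqDist u w = ((u.1 - w.1) + Complex.I*(u.2 - w.2)) * ((u.1 - w.1) - Complex.I*(u.2 - w.2)) := by
  simp only [sqDist]
  linear_combination ((u.2 - w.2)^2) * Complex.I_sq

lemma Kgen (a1 b1 au bu aw bw α1 αu βu αw βw : ℂ)
    (hα1 : α1 ≠ 0) (hau : au ≠ 0) (hbw : bw ≠ 0)
    (hu : αu * βu = au * bu) (hw : αw * βw = aw * bw)
    (huw : (αu - αw) * (βu - βw) = (au - aw) * (bu - bw))
    (hA : a1 * αu = α1 * au) (hB : b1 * αw = α1 * bw) :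
    (aw*b1 - a1*bw) * (au*b1 - a1*bu) = 0 := by
  have gbu : α1 * βu = a1 * bu := mul_left_cancel₀ hau (by linear_combination a1*hu - βu*hA)
  have gbw : α1 * βw = b1 * aw := mul_left_cancel₀ hbw (by linear_combination b1*hw - βw*hB)
  have step : α1 * ((au*b1 - a1*bw) * (a1*bu - aw*b1) - a1*b1*(au-aw)*(bu-bw)) = 0 := by
    linear_combination (a1*b1*α1) * huw - (a1*b1*(αu-αw)) * gbu + (a1*b1*(αu-αw)) * gbw
      - ((a1*bu-aw*b1)*b1) * hA + ((a1*bu-aw*b1)*a1) * hB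
  linear_combination -((mul_eq_zero.mp step).resolve_left hα1)

lemma branchA (a1 b1 a2 b2 a3 b3 α1 β1 α2 β2 α3 β3 : ℂ)
    (ha1 : a1 ≠ 0) (ha2 : a2 ≠ 0) (ha3 : a3 ≠ 0) (hα1 : α1 ≠ 0)
    (h1 : α1 * β1 = a1 * b1) (h2 : α2 * β2 = a2 * b2) (h3 : α3 * β3 = a3 * b3)
    (hA2 : a1 * α2 = α1 * a2) (hA3 : a1 * α3 = α1 * a3) :
    ∃ l : ℂ, l ≠ 0 ∧
      (α1 = l * a1 ∧ β1 = l⁻¹ * b1 ∧ α2 = l * a2 ∧ β2 = l⁻¹ * b2 ∧ α3 = l * a3 ∧ β3 = l⁻¹ * b3) := by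
  have gb2 : α1 * β2 = a1 * b2 := mul_left_cancel₀ ha2 (by linear_combination a1*h2 - β2*hA2)
  have gb3 : α1 * β3 = a1 * b3 := mul_left_cancel₀ ha3 (by linear_combination a1*h3 - β3*hA3)
  refine ⟨α1 / a1, div_ne_zero hα1 ha1, (div_mul_cancel₀ α1 ha1).symm, ?_, ?_, ?_, ?_, ?_⟩
  · rw [inv_div]; field_simp; linear_combination h1
  · field_simp; linear_combination hA2
  · rw [inv_div]; field_simp; linear_combination gb2
  · field_simp; linear_combination hA3
  · rw [inv_div]; field_simp; linear_combination gb3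

lemma core_s15 (a1 b1 a2 b2 a3 b3 α1 β1 α2 β2 α3 β3 : ℂ)
    (ha1 : a1 ≠ 0) (hb1 : b1 ≠ 0) (ha2 : a2 ≠ 0) (hb2 : b2 ≠ 0) (ha3 : a3 ≠ 0) (hb3 : b3 ≠ 0)
    (h1 : α1 * β1 = a1 * b1) (h2 : α2 * β2 = a2 * b2) (h3 : α3 * β3 = a3 * b3)
    (h12 : (α1 - α2) * (β1 - β2) = (a1 - a2) * (b1 - b2))
    (h13 : (α1 - α3) * (β1 - β3) = (a1 - a3) * (b1 - b3))
    (h23 : (α2 - α3) * (β2 - β3) = (a2 - a3) * (b2 - b3)) :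
    ∃ l : ℂ, l ≠ 0 ∧
      ((α1 = l * a1 ∧ β1 = l⁻¹ * b1 ∧ α2 = l * a2 ∧ β2 = l⁻¹ * b2 ∧ α3 = l * a3 ∧ β3 = l⁻¹ * b3) ∨
       (α1 = l * b1 ∧ β1 = l⁻¹ * a1 ∧ α2 = l * b2 ∧ β2 = l⁻¹ * a2 ∧ α3 = l * b3 ∧ β3 = l⁻¹ * a3)) := by
  have hα1 : α1 ≠ 0 := fun h => (mul_ne_zero ha1 hb1) (by rw [← h1, h]; ring)
  have E2 : (a1*α2 - α1*a2) * (b1*α2 - α1*b2) = 0 := by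
    linear_combination (α1*α2 - α2^2) * h1 + (α1*α2 - α1^2) * h2 - α1*α2 * h12
  have E3 : (a1*α3 - α1*a3) * (b1*α3 - α1*b3) = 0 := by
    linear_combination (α1*α3 - α3^2) * h1 + (α1*α3 - α1^2) * h3 - α1*α3 * h13
  have convAB : ∀ a b α : ℂ, a1 * α = α1 * a → a * b1 = a1 * b → b1 * α = α1 * b := by
    intro a b α hA hE
    exact mul_left_cancel₀ ha1 (by linear_combination b1 * hA + α1 * hE)
  have convBA : ∀ a b α : ℂ, b1 * α = α1 * b → a * b1 = a1 * b → a1 * α = α1 * a := by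
    intro a b α hB hE
    exact mul_left_cancel₀ hb1 (by linear_combination a1 * hB - α1 * hE)
  have main : (a1*α2 = α1*a2 ∧ a1*α3 = α1*a3) ∨ (b1*α2 = α1*b2 ∧ b1*α3 = α1*b3) := by
    rcases mul_eq_zero.mp E2 with h2' | h2' <;> rcases mul_eq_zero.mp E3 with h3' | h3'
    · exact Or.inl ⟨sub_eq_zero.mp h2', sub_eq_zero.mp h3'⟩
    · have hA2 := sub_eq_zero.mp h2'
      have hB3 := sub_eq_zero.mp h3'
      have K := Kgen a1 b1 a2 b2 a3 b3 α1 α2 β2 α3 β3 hα1 ha2 hb3 h2 h3 h23 hA2 hB3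
      rcases mul_eq_zero.mp K with hE | hE
      · exact Or.inl ⟨hA2, convBA a3 b3 α3 hB3 (by linear_combination hE)⟩
      · exact Or.inr ⟨convAB a2 b2 α2 hA2 (by linear_combination hE), hB3⟩
    · have hB2 := sub_eq_zero.mp h2'
      have hA3 := sub_eq_zero.mp h3'
      have K := Kgen a1 b1 a3 b3 a2 b2 α1 α3 β3 α2 β2 hα1 ha3 hb2 h3 h2
        (by linear_combination h23) hA3 hB2
      rcases mul_eq_zero.mp K with hE | hE
      · exact Or.inl ⟨convBA a2 b2 α2 hB2 (by linear_combination hE), hA3⟩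
      · exact Or.inr ⟨hB2, convAB a3 b3 α3 hA3 (by linear_combination hE)⟩
    · exact Or.inr ⟨sub_eq_zero.mp h2', sub_eq_zero.mp h3'⟩
  rcases main with ⟨hA2, hA3⟩ | ⟨hB2, hB3⟩
  · obtain ⟨l, hl, h⟩ :=
      branchA a1 b1 a2 b2 a3 b3 α1 β1 α2 β2 α3 β3 ha1 ha2 ha3 hα1 h1 h2 h3 hA2 hA3
    exact ⟨l, hl, Or.inl h⟩
  · obtain ⟨l, hl, h⟩ :=
      branchA b1 a1 b2 a2 b3 a3 α1 β1 α2 β2 α3 β3 hb1 hb2 hb3 hα1 (by linear_combination h1)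
        (by linear_combination h2) (by linear_combination h3) hB2 hB3
    exact ⟨l, hl, Or.inr h⟩

theorem fiber_eq_orbit (C : Set (ℂ × ℂ)) (hC : IsPlaneCurve C)
    (p : Fin 4 → ℂ × ℂ) (hpC : ∀ i, p i ∈ C)
    (hpW : ∀ j k : Fin 4, j < k → sqDist (p j) (p k) ≠ 0)
    (hnc : ((p 0).1 - (p 1).1) * ((p 2).2 - (p 0).2) +
           ((p 0).2 - (p 1).2) * ((p 2).1 - (p 0).1) ≠ 0) :
    ∀ q : Fin 4 → ℂ × ℂ,
      ((∀ i, q i ∈ C) ∧ (∀ j k : Fin 4, j < k → sqDist (q j) (q k) = sqDist (p j) (p k)) ∧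
        (∀ j k : Fin 4, j < k → sqDist (q j) (q k) ≠ 0)) ↔
      ((∃ (A : Matrix (Fin 2) (Fin 2) ℂ) (v : ℂ × ℂ), IsOrtho A ∧
          ∀ i, euclApply A v (p i) = q i) ∧ ∀ i, q i ∈ C) := by
  intro q
  constructor
  · rintro ⟨hqC, hd, hqW⟩
    refine ⟨?_, hqC⟩
    -- nonvanishing of isotropic coordinates of differences
    have fac : ∀ (j k : Fin 4), j < k →
        (((p k).1 - (p j).1) + Complex.I*((p k).2 - (p j).2)) *
        (((p k).1 - (p j).1) - Complex.I*((p k).2 - (p j).2)) ≠ 0 := by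
      intro j k hjk h
      exact hpW j k hjk (by rw [sq_factor]; linear_combination h)
    have facq : ∀ (j k : Fin 4), j < k →
        (((q j).1 - (q k).1) + Complex.I*((q j).2 - (q k).2)) *
        (((q j).1 - (q k).1) - Complex.I*((q j).2 - (q k).2)) =
        (((p j).1 - (p k).1) + Complex.I*((p j).2 - (p k).2)) *
        (((p j).1 - (p k).1) - Complex.I*((p j).2 - (p k).2)) := by
      intro j k hjk
      have t := hd j k hjk
      rw [sq_factor, sq_factor] at t
      exact t
    obtain ⟨x1, y1⟩ := mul_ne_zero_iff.mp (fac 0 1 (by decide))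
    obtain ⟨x2, y2⟩ := mul_ne_zero_iff.mp (fac 0 2 (by decide))
    obtain ⟨x3, y3⟩ := mul_ne_zero_iff.mp (fac 0 3 (by decide))
    obtain ⟨l, hl, hcase⟩ :=
      core_s15 (((p 1).1 - (p 0).1) + Complex.I*((p 1).2 - (p 0).2))
        (((p 1).1 - (p 0).1) - Complex.I*((p 1).2 - (p 0).2))
        (((p 2).1 - (p 0).1) + Complex.I*((p 2).2 - (p 0).2))
        (((p 2).1 - (p 0).1) - Complex.I*((p 2).2 - (p 0).2))
        (((p 3).1 - (p 0).1) + Complex.I*((p 3).2 - (p 0).2))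
        (((p 3).1 - (p 0).1) - Complex.I*((p 3).2 - (p 0).2))
        (((q 1).1 - (q 0).1) + Complex.I*((q 1).2 - (q 0).2))
        (((q 1).1 - (q 0).1) - Complex.I*((q 1).2 - (q 0).2))
        (((q 2).1 - (q 0).1) + Complex.I*((q 2).2 - (q 0).2))
        (((q 2).1 - (q 0).1) - Complex.I*((q 2).2 - (q 0).2))
        (((q 3).1 - (q 0).1) + Complex.I*((q 3).2 - (q 0).2))
        (((q 3).1 - (q 0).1) - Complex.I*((q 3).2 - (q 0).2))
        x1 y1 x2 y2 x3 y3
        (by linear_combination facq 0 1 (by decide))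
        (by linear_combination facq 0 2 (by decide))
        (by linear_combination facq 0 3 (by decide))
        (by linear_combination facq 1 2 (by decide))
        (by linear_combination facq 1 3 (by decide))
        (by linear_combination facq 2 3 (by decide))
    have hll := mul_inv_cancel₀ hl
    rcases hcase with ⟨e1, f1, e2, f2, e3, f3⟩ | ⟨e1, f1, e2, f2, e3, f3⟩
    · -- rotation
      refine ⟨!![(l+l⁻¹)/2, Complex.I*(l-l⁻¹)/2; -(Complex.I*(l-l⁻¹)/2), (l+l⁻¹)/2],
        ((q 0).1 - ((l+l⁻¹)/2*(p 0).1 + Complex.I*(l-l⁻¹)/2*(p 0).2),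
         (q 0).2 - (-(Complex.I*(l-l⁻¹)/2)*(p 0).1 + (l+l⁻¹)/2*(p 0).2)), ?_, ?_⟩
      · unfold IsOrtho
        ext i j
        fin_cases i <;> fin_cases j <;>
          simp [Matrix.mul_apply, Fin.sum_univ_two, Matrix.one_apply,
            Matrix.transpose_apply, Matrix.vecHead, Matrix.vecTail] <;>
          first
            | ring1
            | linear_combination ((l-l⁻¹)^2/4) * Complex.I_sq + hll
      · have m0 : euclApply !![(l+l⁻¹)/2, Complex.I*(l-l⁻¹)/2; -(Complex.I*(l-l⁻¹)/2), (l+l⁻¹)/2] ((q 0).1 - ((l+l⁻¹)/2*(p 0).1 + Complex.I*(l-l⁻¹)/2*(p 0).2), (q 0).2 - (-(Complex.I*(l-l⁻¹)/2)*(p 0).1 + (l+l⁻¹)/2*(p 0).2)) (p 0) = q 0 := by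
          apply Prod.ext <;> simp [euclApply] <;> ring
        have m1 : euclApply !![(l+l⁻¹)/2, Complex.I*(l-l⁻¹)/2; -(Complex.I*(l-l⁻¹)/2), (l+l⁻¹)/2] ((q 0).1 - ((l+l⁻¹)/2*(p 0).1 + Complex.I*(l-l⁻¹)/2*(p 0).2), (q 0).2 - (-(Complex.I*(l-l⁻¹)/2)*(p 0).1 + (l+l⁻¹)/2*(p 0).2)) (p 1) = q 1 := by
          apply Prod.ext <;> simp [euclApply, Matrix.vecHead, Matrix.vecTail]
          · linear_combination (-1/2 : ℂ) * e1 + (-1/2 : ℂ) * f1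
          · linear_combination (Complex.I/2) * e1 - (Complex.I/2) * f1
              - ((q 1).2 - (q 0).2 - (l+l⁻¹)/2*((p 1).2 - (p 0).2)) * Complex.I_sq
        have m2 : euclApply !![(l+l⁻¹)/2, Complex.I*(l-l⁻¹)/2; -(Complex.I*(l-l⁻¹)/2), (l+l⁻¹)/2] ((q 0).1 - ((l+l⁻¹)/2*(p 0).1 + Complex.I*(l-l⁻¹)/2*(p 0).2), (q 0).2 - (-(Complex.I*(l-l⁻¹)/2)*(p 0).1 + (l+l⁻¹)/2*(p 0).2)) (p 2) = q 2 := by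
          apply Prod.ext <;> simp [euclApply, Matrix.vecHead, Matrix.vecTail]
          · linear_combination (-1/2 : ℂ) * e2 + (-1/2 : ℂ) * f2
          · linear_combination (Complex.I/2) * e2 - (Complex.I/2) * f2
              - ((q 2).2 - (q 0).2 - (l+l⁻¹)/2*((p 2).2 - (p 0).2)) * Complex.I_sq
        have m3 : euclApply !![(l+l⁻¹)/2, Complex.I*(l-l⁻¹)/2; -(Complex.I*(l-l⁻¹)/2), (l+l⁻¹)/2] ((q 0).1 - ((l+l⁻¹)/2*(p 0).1 + Complex.I*(l-l⁻¹)/2*(p 0).2), (q 0).2 - (-(Complex.I*(l-l⁻¹)/2)*(p 0).1 + (l+l⁻¹)/2*(p 0).2)) (p 3) = q 3 := by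
          apply Prod.ext <;> simp [euclApply, Matrix.vecHead, Matrix.vecTail]
          · linear_combination (-1/2 : ℂ) * e3 + (-1/2 : ℂ) * f3
          · linear_combination (Complex.I/2) * e3 - (Complex.I/2) * f3
              - ((q 3).2 - (q 0).2 - (l+l⁻¹)/2*((p 3).2 - (p 0).2)) * Complex.I_sq
        intro i; fin_cases i
        exacts [m0, m1, m2, m3]
    · -- reflection
      refine ⟨!![(l+l⁻¹)/2, -(Complex.I*(l-l⁻¹)/2); -(Complex.I*(l-l⁻¹)/2), -((l+l⁻¹)/2)],
        ((q 0).1 - ((l+l⁻¹)/2*(p 0).1 + -(Complex.I*(l-l⁻¹)/2)*(p 0).2),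
         (q 0).2 - (-(Complex.I*(l-l⁻¹)/2)*(p 0).1 + -((l+l⁻¹)/2)*(p 0).2)), ?_, ?_⟩
      · unfold IsOrtho
        ext i j
        fin_cases i <;> fin_cases j <;>
          simp [Matrix.mul_apply, Fin.sum_univ_two, Matrix.one_apply,
            Matrix.transpose_apply, Matrix.vecHead, Matrix.vecTail] <;>
          first
            | ring1
            | linear_combination ((l-l⁻¹)^2/4) * Complex.I_sq + hll
      · have m0 : euclApply !![(l+l⁻¹)/2, -(Complex.I*(l-l⁻¹)/2); -(Complex.I*(l-l⁻¹)/2), -((l+l⁻¹)/2)] ((q 0).1 - ((l+l⁻¹)/2*(p 0).1 + -(Complex.I*(l-l⁻¹)/2)*(p 0).2), (q 0).2 - (-(Complex.I*(l-l⁻¹)/2)*(p 0).1 + -((l+l⁻¹)/2)*(p 0).2)) (p 0) = q 0 := by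
          apply Prod.ext <;> simp [euclApply] <;> ring
        have m1 : euclApply !![(l+l⁻¹)/2, -(Complex.I*(l-l⁻¹)/2); -(Complex.I*(l-l⁻¹)/2), -((l+l⁻¹)/2)] ((q 0).1 - ((l+l⁻¹)/2*(p 0).1 + -(Complex.I*(l-l⁻¹)/2)*(p 0).2), (q 0).2 - (-(Complex.I*(l-l⁻¹)/2)*(p 0).1 + -((l+l⁻¹)/2)*(p 0).2)) (p 1) = q 1 := by
          apply Prod.ext <;> simp [euclApply, Matrix.vecHead, Matrix.vecTail]
          · linear_combination (-1/2 : ℂ) * e1 + (-1/2 : ℂ) * f1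
          · linear_combination (Complex.I/2) * e1 - (Complex.I/2) * f1
              - ((q 1).2 - (q 0).2 + (l+l⁻¹)/2*((p 1).2 - (p 0).2)) * Complex.I_sq
        have m2 : euclApply !![(l+l⁻¹)/2, -(Complex.I*(l-l⁻¹)/2); -(Complex.I*(l-l⁻¹)/2), -((l+l⁻¹)/2)] ((q 0).1 - ((l+l⁻¹)/2*(p 0).1 + -(Complex.I*(l-l⁻¹)/2)*(p 0).2), (q 0).2 - (-(Complex.I*(l-l⁻¹)/2)*(p 0).1 + -((l+l⁻¹)/2)*(p 0).2)) (p 2) = q 2 := by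
          apply Prod.ext <;> simp [euclApply, Matrix.vecHead, Matrix.vecTail]
          · linear_combination (-1/2 : ℂ) * e2 + (-1/2 : ℂ) * f2
          · linear_combination (Complex.I/2) * e2 - (Complex.I/2) * f2
              - ((q 2).2 - (q 0).2 + (l+l⁻¹)/2*((p 2).2 - (p 0).2)) * Complex.I_sq
        have m3 : euclApply !![(l+l⁻¹)/2, -(Complex.I*(l-l⁻¹)/2); -(Complex.I*(l-l⁻¹)/2), -((l+l⁻¹)/2)] ((q 0).1 - ((l+l⁻¹)/2*(p 0).1 + -(Complex.I*(l-l⁻¹)/2)*(p 0).2), (q 0).2 - (-(Complex.I*(l-l⁻¹)/2)*(p 0).1 + -((l+l⁻¹)/2)*(p 0).2)) (p 3) = q 3 := by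
          apply Prod.ext <;> simp [euclApply, Matrix.vecHead, Matrix.vecTail]
          · linear_combination (-1/2 : ℂ) * e3 + (-1/2 : ℂ) * f3
          · linear_combination (Complex.I/2) * e3 - (Complex.I/2) * f3
              - ((q 3).2 - (q 0).2 + (l+l⁻¹)/2*((p 3).2 - (p 0).2)) * Complex.I_sq
        intro i; fin_cases i
        exacts [m0, m1, m2, m3]
  · rintro ⟨⟨A, v, hA, hAv⟩, hqC⟩
    refine ⟨hqC, ?_, ?_⟩
    · intro j k hjk
      rw [← hAv j, ← hAv k, sqDist_eucl A hA v]
    · intro j k hjk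
      rw [← hAv j, ← hAv k, sqDist_eucl A hA v]
      exact hpW j k hjk
end
end
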